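/- Lemma: For every N ≥ 1 and every ξ₀,…,ξ_{N-1} ∈ ℕ₀ such that the cylinder W := [ξ₀,…,ξ_{N-1}] satisfies ℙ⁻(W) > 0, one has lim_{n→∞} ℙ⁻(Σ_n^W) = 0. -/

import Mathlib

open MeasureTheory Filter Topology Set
open scoped BigOperators

noncomputable section

/-- Tail sum ∑_{j ≥ i} p_j. -/
def tailSum (p : ℕ → ℝ) (i : ℕ) : ℝ := ∑' j : ℕ, p (i + j)

/-- Invariant distribution m_i = (∑_{j≥i} p_j)/(1+E). -/
def mdist (p : ℕ → ℝ) (E : ℝ) (i : ℕ) : ℝ := tailSum p i / (1 + E)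

/-- Transition matrix entries: p_{0j} = p_j, p_{(k+1)k} = 1, else 0. -/
def Ptrans (p : ℕ → ℝ) (i j : ℕ) : ℝ := if i = 0 then p j else if i = j + 1 then 1 else 0

/-- Reversed transition matrix q_{ij} = (m_j / m_i) · p_{ji}. -/
def qtrans (p : ℕ → ℝ) (E : ℝ) (i j : ℕ) : ℝ := mdist p E j / mdist p E i * Ptrans p j i

/-- Cylinder set of length n determined by the first n values of ξ. -/
def cyl (ξ : ℕ → ℕ) (n : ℕ) : Set (ℕ → ℕ) := {ω | ∀ i < n, ω i = ξ i}

/-- Probability assigned by ℙ⁻ to the cylinder [ξ₀,…,ξ_{n-1}]. -/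
def cylProbQ (p : ℕ → ℝ) (E : ℝ) (ξ : ℕ → ℕ) (n : ℕ) : ℝ :=
  mdist p E (ξ 0) * ∏ i ∈ Finset.range (n - 1), qtrans p E (ξ i) (ξ (i + 1))

/-- Probability assigned by ℙ to the cylinder [ξ₀,…,ξ_{n-1}]. -/
def cylProbP (p : ℕ → ℝ) (E : ℝ) (ξ : ℕ → ℕ) (n : ℕ) : ℝ :=
  mdist p E (ξ 0) * ∏ i ∈ Finset.range (n - 1), Ptrans p (ξ i) (ξ (i + 1))

/-- The family f₀ = g, f_k = f for k ≥ 1. -/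
def fseq (a b : ℝ) (g f : Set.Icc a b → Set.Icc a b) : ℕ → Set.Icc a b → Set.Icc a b :=
  fun k => if k = 0 then g else f

/-- itf fI ξ n = f_{ξ₀} ∘ f_{ξ₁} ∘ ⋯ ∘ f_{ξ_{n-1}}. -/
def itf (a b : ℝ) (fI : ℕ → Set.Icc a b → Set.Icc a b) (ξ : ℕ → ℕ) :
    ℕ → Set.Icc a b → Set.Icc a b
  | 0 => id
  | n + 1 => fun x => itf a b fI ξ n (fI (ξ n) x)

/-- itfRev fI a n = f_{a_{n-1}} ∘ ⋯ ∘ f_{a_0}  (i.e. f_{a_n}∘⋯∘f_{a_1} with 1-based indexing). -/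
def itfRev (a b : ℝ) (fI : ℕ → Set.Icc a b → Set.Icc a b) (c : ℕ → ℕ) :
    ℕ → Set.Icc a b → Set.Icc a b
  | 0 => id
  | n + 1 => fun x => fI (c n) (itfRev a b fI c n x)

/-- I_ξ = ⋂_{n ≥ 1} (f_{ξ₀}∘⋯∘f_{ξ_{n-1}})(I). -/
def Iset (a b : ℝ) (fI : ℕ → Set.Icc a b → Set.Icc a b) (ξ : ℕ → ℕ) : Set (Set.Icc a b) :=
  ⋂ n : ℕ, itf a b fI ξ (n + 1) '' Set.univ

/-- S = {ξ : diam I_ξ = 0}. -/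
def Sset (a b : ℝ) (fI : ℕ → Set.Icc a b → Set.Icc a b) : Set (ℕ → ℕ) :=
  {ξ | EMetric.diam (Iset a b fI ξ) = 0}

/-- The j-th sliceM of a measure on ℕ × I:  μ_j(C) = μ̂({j} × C). -/
def sliceM (a b : ℝ) (μ : Measure (ℕ × Set.Icc a b)) (k : ℕ) : Measure (Set.Icc a b) :=
  Measure.map Prod.snd (μ.restrict ({k} ×ˢ (Set.univ : Set (Set.Icc a b))))

/-- The Markov operator T:  (Tμ̂)({j}×C) = μ_{j+1}(f_j⁻¹ C) + p_j·μ₀(f_j⁻¹ C). -/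
def TOp (a b : ℝ) (p : ℕ → ℝ) (fI : ℕ → Set.Icc a b → Set.Icc a b)
    (μ : Measure (ℕ × Set.Icc a b)) : Measure (ℕ × Set.Icc a b) :=
  Measure.sum fun j =>
    Measure.map (fun x => (j, fI j x))
      (sliceM a b μ (j + 1) + ENNReal.ofReal (p j) • sliceM a b μ 0)

/-- Extend ξ : Fin n → ℕ to ℕ → ℕ by 0. -/
def padSeq {n : ℕ} (ξ : Fin n → ℕ) : ℕ → ℕ := fun i => if h : i < n then ξ ⟨i, h⟩ else 0

/-- S_nˣ = {ξ : x ∈ I_ξⁿ}. -/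
def SnX (a b : ℝ) (fI : ℕ → Set.Icc a b → Set.Icc a b) (x : Set.Icc a b) (n : ℕ) :
    Set (ℕ → ℕ) :=
  {ξ | x ∈ itf a b fI ξ n '' Set.univ}

/-- Σ_n^W = {ω : σ^{iN}(ω) ∉ W for i = 0,…,n-1}, for W the cylinder [ξ₀,…,ξ_{N-1}]. -/
def SigW (ξ : ℕ → ℕ) (N n : ℕ) : Set (ℕ → ℕ) :=
  {ω | ∀ i < n, ¬ (∀ k < N, ω (i * N + k) = ξ k)}

open Classical in
/-- The block-replacement map H_n: replace every length-N block equal to (ξ₀,…,ξ_{N-1})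
by (η₀,…,η_{N-1}). -/
noncomputable def Hn (ξ η : ℕ → ℕ) (N : ℕ) (c : ℕ → ℕ) : ℕ → ℕ :=
  fun i => if (∀ k < N, c (i / N * N + k) = ξ k) then η (i % N) else c i

/-- The splitting condition. -/
def Splitting (a b : ℝ) (fI : ℕ → Set.Icc a b → Set.Icc a b) (P : Measure (ℕ → ℕ)) : Prop :=
  ∃ (l r : ℕ) (c d : ℕ → ℕ), 1 ≤ l ∧ 1 ≤ r ∧
    0 < P (cyl c l) ∧ 0 < P (cyl d r) ∧ c (l - 1) = d (r - 1) ∧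
    (itfRev a b fI c l '' Set.univ) ∩ (itfRev a b fI d r '' Set.univ) = ∅


/-!
Under `ℙ⁻` the coordinates form a stationary Markov chain with kernel `q`, which from `i` either
moves to `i + 1` or jumps to `0`, the jump being possible exactly when `p i > 0`. Stationarity
bounds the probability that the state at time `nN - 1` exceeds `S` by `ε`, uniformly in `n`.
Choosing `S` with `p S > 0`, every state `s ≤ S` has a path of one fixed length (climb to `S`,
jump to `0`, wait, climb to `ξ₀`, run through `W`) that places a copy of `W` on an aligned block;
let `δ > 0` bound these path probabilities from below. The Markov property then gives
`ℙ⁻(Σ_{n+K}^W) + δ ℙ⁻(Σ_n^W) ≤ ℙ⁻(Σ_n^W) + δ ε`, so the limit of the decreasing sequence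
`ℙ⁻(Σ_n^W)` is at most `ε`.
-/

open Function
open scoped ENNReal

def pathProb (q : ℕ → ℕ → ℝ) (v : ℕ → ℕ) (len : ℕ) : ℝ :=
  ∏ r ∈ Finset.range len, q (v r) (v (r + 1))

def shiftCyl (l : ℕ) (v : ℕ → ℕ) (n : ℕ) : Set (ℕ → ℕ) := {ω | ∀ r < n, ω (l + r) = v r}

def IsDeterminedUpTo (l : ℕ) (A : Set (ℕ → ℕ)) : Prop :=
  ∀ ω ∈ A, ∀ ω', (∀ i ≤ l, ω' i = ω i) → ω' ∈ A

def IsMarkovMeasure (Pm : Measure (ℕ → ℕ)) (m : ℕ → ℝ) (q : ℕ → ℕ → ℝ) : Prop :=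
  ∀ n, 1 ≤ n → ∀ ξ : ℕ → ℕ, Pm (cyl ξ n) = ENNReal.ofReal (m (ξ 0) * pathProb q ξ (n - 1))

lemma measurableSet_eval_eq (l s : ℕ) : MeasurableSet {ω : ℕ → ℕ | ω l = s} :=
  measurableSet_eq_fun (measurable_pi_apply l) measurable_const

lemma measurableSet_cyl (ξ : ℕ → ℕ) (n : ℕ) : MeasurableSet (cyl ξ n) := by
  simp only [cyl, Set.ofPred_forall]
  exact .iInter fun i => .iInter fun _ => measurableSet_eval_eq i (ξ i)

lemma measurableSet_shiftCyl (l : ℕ) (v : ℕ → ℕ) (n : ℕ) : MeasurableSet (shiftCyl l v n) := by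
  simp only [shiftCyl, Set.ofPred_forall]
  exact .iInter fun r => .iInter fun _ => measurableSet_eval_eq (l + r) (v r)

lemma shiftCyl_subset_eval_eq (l : ℕ) (v : ℕ → ℕ) (len : ℕ) :
    shiftCyl l v (len + 1) ⊆ {ω | ω l = v 0} :=
  fun _ hω => hω 0 len.succ_pos

lemma pathProb_nonneg {q : ℕ → ℕ → ℝ} (hq : ∀ i j, 0 ≤ q i j) (v : ℕ → ℕ) (len : ℕ) :
    0 ≤ pathProb q v len :=
  Finset.prod_nonneg fun _ _ => hq _ _

lemma pathProb_append (q : ℕ → ℕ → ℝ) (w v : ℕ → ℕ) (l len : ℕ) (hwv : w l = v 0) :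
    pathProb q (fun i => if i ≤ l then w i else v (i - l)) (l + len)
      = pathProb q w l * pathProb q v len := by
  unfold pathProb
  rw [Finset.prod_range_add]
  congr 1
  · refine Finset.prod_congr rfl fun i hi => ?_
    have hi := Finset.mem_range.1 hi
    simp only [if_pos hi.le, if_pos (Nat.succ_le_of_lt hi)]
  · refine Finset.prod_congr rfl fun r _ => ?_
    rcases r with _ | r
    · simp [hwv]
    · simp only [show ¬ l + (r + 1) ≤ l by omega, show ¬ l + (r + 1) + 1 ≤ l by omega,
        if_false, Nat.add_sub_cancel_left, show l + (r + 1) + 1 - l = r + 1 + 1 by omega]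

lemma cyl_inter_shiftCyl (w v : ℕ → ℕ) (l len : ℕ) (hwv : w l = v 0) :
    cyl w (l + 1) ∩ shiftCyl l v (len + 1)
      = cyl (fun i => if i ≤ l then w i else v (i - l)) (l + len + 1) := by
  ext ω
  simp only [cyl, shiftCyl, Set.mem_inter_iff, Set.mem_ofPred_eq]
  constructor
  · rintro ⟨hw, hv⟩ i hi
    split_ifs with hil
    · exact hw i (by omega)
    · simpa [show l + (i - l) = i by omega] using hv (i - l) (by omega)
  · intro h
    refine ⟨fun i hi => by simpa [show i ≤ l by omega] using h i (by omega), fun r hr => ?_⟩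
    rcases r with _ | r
    · simpa [hwv] using h l (by omega)
    · simpa [show ¬ l + (r + 1) ≤ l by omega] using h (l + (r + 1)) (by omega)

lemma IsDeterminedUpTo.padSeq_mem {A : Set (ℕ → ℕ)} {l : ℕ}
    (hA : IsDeterminedUpTo l A) {ω : ℕ → ℕ} (hω : ω ∈ A) :
    padSeq (fun i : Fin (l + 1) => ω i) ∈ A :=
  hA ω hω _ fun i hi => by simp [padSeq, Nat.lt_succ_of_le hi]

lemma IsDeterminedUpTo.eq_iUnion_cyl {A : Set (ℕ → ℕ)} {l : ℕ}
    (hA : IsDeterminedUpTo l A) :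
    A = ⋃ b : {b : Fin (l + 1) → ℕ // padSeq b ∈ A}, cyl (padSeq b.1) (l + 1) := by
  ext ω
  simp only [Set.mem_iUnion]
  constructor
  · intro hω
    exact ⟨⟨_, hA.padSeq_mem hω⟩, fun i hi => by simp [padSeq, hi]⟩
  · rintro ⟨⟨b, hb⟩, hω⟩
    exact hA _ hb ω fun i hi => hω i (Nat.lt_succ_of_le hi)

lemma pairwise_disjoint_cyl_padSeq (L : ℕ) :
    Pairwise (Disjoint on fun b : Fin L → ℕ => cyl (padSeq b) L) := by
  intro b b' hne
  obtain ⟨i, hi⟩ := Function.ne_iff.1 hne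
  refine Set.disjoint_left.2 fun ω hb hb' => hi ?_
  simpa [padSeq] using (hb i i.2).symm.trans (hb' i i.2)

namespace IsMarkovMeasure

variable {Pm : Measure (ℕ → ℕ)} {m : ℕ → ℝ} {q : ℕ → ℕ → ℝ}

lemma measure_cyl_inter_shiftCyl (hPm : IsMarkovMeasure Pm m q) (hm : ∀ i, 0 ≤ m i)
    (hq : ∀ i j, 0 ≤ q i j) {w v : ℕ → ℕ} {l : ℕ} (len : ℕ) (hwv : w l = v 0) :
    Pm (cyl w (l + 1) ∩ shiftCyl l v (len + 1))
      = Pm (cyl w (l + 1)) * ENNReal.ofReal (pathProb q v len) := by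
  rw [cyl_inter_shiftCyl w v l len hwv, hPm _ (by omega), hPm _ (by omega),
    show l + len + 1 - 1 = l + len by omega, pathProb_append q w v l len hwv,
    Nat.add_sub_cancel, ← mul_assoc,
    ENNReal.ofReal_mul (mul_nonneg (hm _) (pathProb_nonneg hq _ _))]
  simp

lemma measure_inter_shiftCyl (hPm : IsMarkovMeasure Pm m q) (hm : ∀ i, 0 ≤ m i)
    (hq : ∀ i j, 0 ≤ q i j) {A : Set (ℕ → ℕ)} {l : ℕ}
    (hA : IsDeterminedUpTo l A) (v : ℕ → ℕ) (len : ℕ) :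
    Pm (A ∩ shiftCyl l v (len + 1))
      = Pm (A ∩ {ω | ω l = v 0}) * ENNReal.ofReal (pathProb q v len) := by
  set A' := A ∩ {ω | ω l = v 0}
  have hA' : IsDeterminedUpTo l A' := fun ω hω ω' h =>
    ⟨hA ω hω.1 ω' h, (h l le_rfl).trans hω.2⟩
  have hAA' : A ∩ shiftCyl l v (len + 1) = A' ∩ shiftCyl l v (len + 1) := by
    rw [Set.inter_assoc, Set.inter_eq_right.2 (shiftCyl_subset_eval_eq l v len)]
  have hdisj := (pairwise_disjoint_cyl_padSeq (l + 1)).comp_of_injective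
    (Subtype.val_injective (p := fun b => padSeq b ∈ A'))
  rw [hAA', hA'.eq_iUnion_cyl, Set.iUnion_inter,
    measure_iUnion (hdisj.mono fun _ _ h => h.mono Set.inter_subset_left Set.inter_subset_left)
      fun _ => (measurableSet_cyl _ _).inter (measurableSet_shiftCyl _ _ _),
    measure_iUnion hdisj fun _ => measurableSet_cyl _ _, ← ENNReal.tsum_mul_right]
  refine tsum_congr fun b => hPm.measure_cyl_inter_shiftCyl hm hq len ?_
  simpa [padSeq] using b.2.2

lemma measure_eval_eq (hPm : IsMarkovMeasure Pm m q) (hm : ∀ i, 0 ≤ m i)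
    (hq : ∀ i j, 0 ≤ q i j) (hstat : ∀ s, HasSum (fun j => m j * q j s) (m s)) (k s : ℕ) :
    Pm {ω | ω k = s} = ENNReal.ofReal (m s) := by
  induction k generalizing s with
  | zero =>
    have h := hPm 1 le_rfl fun _ => s
    rwa [show cyl (fun _ => s) 1 = {ω | ω 0 = s} by ext; simp [cyl], pathProb,
      Finset.prod_range_zero, mul_one] at h
  | succ k ih =>
    let v : ℕ → ℕ → ℕ := fun j r => if r = 0 then j else s
    have hunion : {ω : ℕ → ℕ | ω (k + 1) = s} = ⋃ j, shiftCyl k (v j) (1 + 1) := by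
      ext ω
      simp only [Set.mem_ofPred_eq, Set.mem_iUnion, shiftCyl, Nat.lt_succ_iff,
        Nat.le_one_iff_eq_zero_or_eq_one]
      refine ⟨fun h => ⟨ω k, ?_⟩, fun ⟨j, h⟩ => by simpa [v] using h 1 (Or.inr rfl)⟩
      rintro r (rfl | rfl) <;> simp [v, h]
    have hdisj : Pairwise (Disjoint on fun j => shiftCyl k (v j) (1 + 1)) := fun j j' hne =>
      Set.disjoint_left.2 fun ω hj hj' => hne <| by
        simpa [v] using
          (shiftCyl_subset_eval_eq k _ 1 hj).symm.trans (shiftCyl_subset_eval_eq k _ 1 hj')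
    rw [hunion, measure_iUnion hdisj fun _ => measurableSet_shiftCyl _ _ _,
      ← (hstat s).tsum_eq, ENNReal.ofReal_tsum_of_nonneg (fun j => mul_nonneg (hm j) (hq j s))
        (hstat s).summable]
    refine tsum_congr fun j => ?_
    have h := hPm.measure_inter_shiftCyl hm hq (A := Set.univ) (l := k)
      (fun _ _ _ _ => trivial) (v j) 1
    rw [Set.univ_inter, Set.univ_inter] at h
    rw [h, ih, ← ENNReal.ofReal_mul (hm _)]
    simp [v, pathProb]

lemma pos_of_measure_cyl_pos (hPm : IsMarkovMeasure Pm m q) (hq : ∀ i j, 0 ≤ q i j) {N : ℕ}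
    (hN : 1 ≤ N) {ξ : ℕ → ℕ} (hW : 0 < Pm (cyl ξ N)) (k : ℕ) (hk : k < N - 1) :
    0 < q (ξ k) (ξ (k + 1)) := by
  refine (hq _ _).lt_of_ne fun h => hW.ne' ?_
  rw [hPm N hN, pathProb, Finset.prod_eq_zero (Finset.mem_range.2 hk) h.symm, mul_zero,
    ENNReal.ofReal_zero]

lemma map_eval_eq (hPm : IsMarkovMeasure Pm m q) (hm : ∀ i, 0 ≤ m i)
    (hq : ∀ i j, 0 ≤ q i j) (hstat : ∀ s, HasSum (fun j => m j * q j s) (m s)) (k : ℕ) :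
    Pm.map (fun ω => ω k) = Pm.map (fun ω => ω 0) := by
  refine Measure.ext_iff_singleton.2 fun s => ?_
  rw [Measure.map_apply (measurable_pi_apply k) (measurableSet_singleton s),
    Measure.map_apply (measurable_pi_apply 0) (measurableSet_singleton s)]
  exact (hPm.measure_eval_eq hm hq hstat k s).trans (hPm.measure_eval_eq hm hq hstat 0 s).symm

lemma exists_forall_measure_lt_eval_le [IsFiniteMeasure Pm] (hPm : IsMarkovMeasure Pm m q)
    (hm : ∀ i, 0 ≤ m i) (hq : ∀ i j, 0 ≤ q i j)
    (hstat : ∀ s, HasSum (fun j => m j * q j s) (m s)) {ε : ℝ≥0∞} (hε : 0 < ε) :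
    ∃ M, ∀ k, Pm {ω | M < ω k} ≤ ε := by
  have hν : ∀ M k, Pm {ω | M < ω k} = Pm.map (fun ω => ω 0) (Set.Ioi M) := fun M k => by
    rw [← hPm.map_eval_eq hm hq hstat k, Measure.map_apply (measurable_pi_apply k)
      measurableSet_Ioi]
    rfl
  have hempty : ⋂ M : ℕ, Set.Ioi M = ∅ :=
    Set.eq_empty_iff_forall_notMem.2 fun a ha => lt_irrefl a (Set.mem_iInter.1 ha a)
  have htend : Tendsto (fun M => Pm.map (fun ω => ω 0) (Set.Ioi M)) atTop (𝓝 0) := by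
    simpa [Function.comp_def, hempty] using tendsto_measure_iInter_atTop
      (fun M => measurableSet_Ioi.nullMeasurableSet) (fun _ _ h => Set.Ioi_subset_Ioi h)
      ⟨0, measure_ne_top (Pm.map (fun ω : ℕ → ℕ => ω 0)) _⟩
  obtain ⟨M, hM⟩ := (htend.eventually (gt_mem_nhds hε)).exists
  exact ⟨M, fun k => (hν M k).le.trans hM.le⟩

lemma le_measure_biUnion_inter_shiftCyl (hPm : IsMarkovMeasure Pm m q) (hm : ∀ i, 0 ≤ m i)
    (hq : ∀ i j, 0 ≤ q i j) {A : Set (ℕ → ℕ)} (hAm : MeasurableSet A) {l : ℕ}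
    (hA : IsDeterminedUpTo l A) (T : Finset ℕ) (v : ℕ → ℕ → ℕ)
    (hv : ∀ s, v s 0 = s) {δ : ℝ} (len : ℕ) (hδ : ∀ s ∈ T, δ ≤ pathProb q (v s) len) :
    ENNReal.ofReal δ * Pm (A ∩ {ω | ω l ∈ T})
      ≤ Pm (⋃ s ∈ T, A ∩ shiftCyl l (v s) (len + 1)) := by
  have hpieces : A ∩ {ω | ω l ∈ T} = ⋃ s ∈ T, A ∩ {ω | ω l = s} := by
    ext ω; simp
  rw [hpieces, measure_biUnion_finset, measure_biUnion_finset, Finset.mul_sum]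
  · refine Finset.sum_le_sum fun s hs => ?_
    rw [hPm.measure_inter_shiftCyl hm hq hA, hv, mul_comm]
    exact mul_le_mul_right (ENNReal.ofReal_le_ofReal (hδ s hs)) _
  · intro s _ s' _ hne
    refine Set.disjoint_left.2 fun ω hs hs' => hne ?_
    rw [← hv s, ← hv s']
    exact (shiftCyl_subset_eval_eq l _ len hs.2).symm.trans (shiftCyl_subset_eval_eq l _ len hs'.2)
  · exact fun s _ => hAm.inter (measurableSet_shiftCyl _ _ _)
  · intro s _ s' _ hne
    exact Set.disjoint_left.2 fun ω hs hs' => hne (hs.2.symm.trans hs'.2)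
  · exact fun s _ => hAm.inter (measurableSet_eval_eq _ _)

end IsMarkovMeasure

lemma tendsto_zero_of_antitone_of_add_mul_le {x : ℕ → ℝ≥0∞} (hx : Antitone x) (hx0 : x 0 ≠ ⊤)
    (h : ∀ ε > 0, ∃ δ > 0, δ ≠ ⊤ ∧ ∃ K, ∀ᶠ n in atTop, x (n + K) + δ * x n ≤ x n + δ * ε) :
    Tendsto x atTop (𝓝 0) := by
  have hlim := tendsto_atTop_iInf hx
  have hfin : ⨅ n, x n ≠ ⊤ := ne_top_of_le_ne_top hx0 (iInf_le x 0)
  convert hlim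
  refine (le_antisymm (le_of_forall_gt_imp_ge_of_dense fun ε hε => ?_) bot_le).symm
  obtain ⟨δ, hδ, hδtop, K, hK⟩ := h ε hε
  have hle := le_of_tendsto_of_tendsto
    ((hlim.comp (tendsto_add_atTop_nat K)).add (ENNReal.Tendsto.const_mul hlim (Or.inr hδtop)))
    (hlim.add tendsto_const_nhds) hK
  exact (ENNReal.mul_le_mul_iff_right hδ.ne' hδtop).1 ((ENNReal.add_le_add_iff_left hfin).1 hle)

/-- From `s ≤ S`: climb to `S`, jump to `0`, wait there, climb to `ξ 0` so as to reach it at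
time `B`, then follow `ξ`. -/
def returnPath (ξ : ℕ → ℕ) (S B s r : ℕ) : ℕ :=
  if r ≤ S - s then s + r else if r + ξ 0 ≤ B then 0 else if r ≤ B then r + ξ 0 - B else ξ (r - B)

section returnPath

variable {ξ : ℕ → ℕ} {S B s : ℕ}

lemma returnPath_zero : returnPath ξ S B s 0 = s := by
  simp [returnPath]

lemma returnPath_add (hB : S + ξ 0 < B) (k : ℕ) : returnPath ξ S B s (B + k) = ξ k := by
  rcases k with _ | k
  · unfold returnPath
    split_ifs <;> omega
  · simp only [returnPath, show ¬ B + (k + 1) ≤ S - s by omega,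
      show ¬ B + (k + 1) + ξ 0 ≤ B by omega, show ¬ B + (k + 1) ≤ B by omega, if_false,
      Nat.add_sub_cancel_left]

lemma returnPath_succ (hs : s ≤ S) (hB : S + ξ 0 < B) {r : ℕ} (hr : r < B) :
    returnPath ξ S B s (r + 1) = returnPath ξ S B s r + 1 ∨
      returnPath ξ S B s (r + 1) = 0 ∧ (returnPath ξ S B s r = S ∨ returnPath ξ S B s r = 0) := by
  unfold returnPath
  split_ifs <;> omega

lemma pathProb_returnPath_pos {q : ℕ → ℕ → ℝ} (hup : ∀ i, 0 < q i (i + 1)) (h00 : 0 < q 0 0)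
    (hS0 : 0 < q S 0) {N : ℕ} (hξ : ∀ k < N - 1, 0 < q (ξ k) (ξ (k + 1))) (hs : s ≤ S)
    (hB : S + ξ 0 < B) : 0 < pathProb q (returnPath ξ S B s) (B + (N - 1)) := by
  refine Finset.prod_pos fun r hr => ?_
  rcases lt_or_ge r B with hrB | hrB
  · rcases returnPath_succ hs hB hrB with h | ⟨h0, hr0 | hr0⟩
    · rw [h]
      exact hup _
    · rwa [h0, hr0]
    · rwa [h0, hr0]
  · obtain ⟨k, rfl⟩ := Nat.exists_eq_add_of_le hrB
    rw [returnPath_add hB, add_assoc, returnPath_add hB]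
    exact hξ k (by have := Finset.mem_range.1 hr; omega)

end returnPath

section SigW

variable {ξ : ℕ → ℕ} {N : ℕ}

lemma SigW_antitone : Antitone (SigW ξ N) :=
  fun _ _ h _ hω i hi => hω i (hi.trans_le h)

lemma measurableSet_SigW (n : ℕ) : MeasurableSet (SigW ξ N n) := by
  simp only [SigW, Set.ofPred_forall]
  exact .iInter fun i => .iInter fun _ => (measurableSet_shiftCyl (i * N) ξ N).compl

lemma SigW_isDeterminedUpTo (n : ℕ) : IsDeterminedUpTo (n * N - 1) (SigW ξ N n) := by
  intro ω hω ω' h i hi hblock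
  refine hω i hi fun k hk => ?_
  have : (i + 1) * N ≤ n * N := Nat.mul_le_mul_right N hi
  rw [← h _ (by rw [add_mul] at this; omega)]
  exact hblock k hk

end SigW

namespace IsMarkovMeasure

variable {Pm : Measure (ℕ → ℕ)} {m : ℕ → ℝ} {q : ℕ → ℕ → ℝ} {ξ : ℕ → ℕ} {N S : ℕ}

lemma exists_SigW_step (hPm : IsMarkovMeasure Pm m q) (hm : ∀ i, 0 ≤ m i)
    (hq : ∀ i j, 0 ≤ q i j) (hup : ∀ i, 0 < q i (i + 1)) (h00 : 0 < q 0 0) (hS0 : 0 < q S 0)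
    (hξ : ∀ k < N - 1, 0 < q (ξ k) (ξ (k + 1))) (hN : 1 ≤ N) :
    ∃ δ > 0, ∃ K, ∀ n ≥ 1, Pm (SigW ξ N (n + K))
      + ENNReal.ofReal δ * Pm (SigW ξ N n ∩ {ω | ω (n * N - 1) ∈ Finset.Iic S})
      ≤ Pm (SigW ξ N n) := by
  set B := (S + ξ 0) * N + 1
  have hB : S + ξ 0 < B := Nat.lt_succ_of_le (Nat.le_mul_of_pos_right _ hN)
  refine ⟨(Finset.Iic S).inf' Finset.nonempty_Iic
      fun s => pathProb q (returnPath ξ S B s) (B + (N - 1)),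
    (Finset.lt_inf'_iff _).2 fun s hs =>
      pathProb_returnPath_pos hup h00 hS0 hξ (Finset.mem_Iic.1 hs) hB,
    S + ξ 0 + 1, fun n hn => ?_⟩
  set l := n * N - 1
  set paths := ⋃ s ∈ Finset.Iic S, SigW ξ N n ∩ shiftCyl l (returnPath ξ S B s) (B + (N - 1) + 1)
  have hdisj : Disjoint (SigW ξ N (n + (S + ξ 0 + 1))) paths := by
    refine Set.disjoint_left.2 fun ω hω hpath => ?_
    obtain ⟨s, hs, -, hωs⟩ := Set.mem_iUnion₂.1 hpath
    refine hω (n + (S + ξ 0)) (by omega) fun k hk => ?_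
    have hnN : 1 ≤ n * N := Nat.mul_le_mul hn hN
    have hpos : (n + (S + ξ 0)) * N + k = l + (B + k) := by rw [add_mul]; omega
    rw [hpos, hωs (B + k) (by omega), returnPath_add hB]
  calc _ ≤ Pm (SigW ξ N (n + (S + ξ 0 + 1))) + Pm paths :=
        add_le_add_right (hPm.le_measure_biUnion_inter_shiftCyl hm hq (measurableSet_SigW n)
          (SigW_isDeterminedUpTo n) _ _ (fun _ => returnPath_zero) _
          fun s hs => Finset.inf'_le _ hs) _
    _ = Pm (SigW ξ N (n + (S + ξ 0 + 1)) ∪ paths) :=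
        (measure_union hdisj (.biUnion (Finset.countable_toSet _) fun _ _ =>
          (measurableSet_SigW n).inter (measurableSet_shiftCyl _ _ _))).symm
    _ ≤ Pm (SigW ξ N n) := measure_mono (Set.union_subset (SigW_antitone (by omega))
        (Set.iUnion₂_subset fun _ _ => Set.inter_subset_left))

lemma exists_SigW_contraction (hPm : IsMarkovMeasure Pm m q) (hm : ∀ i, 0 ≤ m i)
    (hq : ∀ i j, 0 ≤ q i j) (hup : ∀ i, 0 < q i (i + 1)) (h00 : 0 < q 0 0) (hS0 : 0 < q S 0)
    (hξ : ∀ k < N - 1, 0 < q (ξ k) (ξ (k + 1))) (hN : 1 ≤ N) {ε : ℝ≥0∞}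
    (htail : ∀ k, Pm {ω | S < ω k} ≤ ε) :
    ∃ δ > 0, δ ≠ ⊤ ∧ ∃ K, ∀ n ≥ 1,
      Pm (SigW ξ N (n + K)) + δ * Pm (SigW ξ N n) ≤ Pm (SigW ξ N n) + δ * ε := by
  obtain ⟨δ, hδ, K, hK⟩ := hPm.exists_SigW_step hm hq hup h00 hS0 hξ hN
  refine ⟨ENNReal.ofReal δ, ENNReal.ofReal_pos.2 hδ, ENNReal.ofReal_ne_top, K, fun n hn => ?_⟩
  set A := SigW ξ N n
  have hsplit : Pm A ≤ Pm (A ∩ {ω | ω (n * N - 1) ∈ Finset.Iic S}) + ε := by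
    refine (measure_mono fun ω hω => ?_).trans ((measure_union_le _ _).trans
      (add_le_add_right (htail (n * N - 1)) _))
    by_cases h : ω (n * N - 1) ≤ S
    · exact Or.inl ⟨hω, Finset.mem_Iic.2 h⟩
    · exact Or.inr (not_le.1 h)
  calc _ ≤ Pm (SigW ξ N (n + K))
          + ENNReal.ofReal δ * (Pm (A ∩ {ω | ω (n * N - 1) ∈ Finset.Iic S}) + ε) := by
        gcongr
    _ = (Pm (SigW ξ N (n + K)) + ENNReal.ofReal δ * Pm (A ∩ {ω | ω (n * N - 1) ∈ Finset.Iic S}))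
          + ENNReal.ofReal δ * ε := by ring
    _ ≤ Pm A + ENNReal.ofReal δ * ε := by gcongr; exact hK n hn

end IsMarkovMeasure

section RenewalChain

variable {p : ℕ → ℝ} {E : ℝ}

lemma tailSum_pos (hp : ∀ n, 0 ≤ p n) (hps : Summable p) (hsupp : ∀ N : ℕ, ∃ n, N ≤ n ∧ 0 < p n)
    (i : ℕ) : 0 < tailSum p i := by
  obtain ⟨n, hin, hpn⟩ := hsupp i
  obtain ⟨j, rfl⟩ := Nat.exists_eq_add_of_le hin
  have hs : Summable fun j => p (i + j) := by simpa [add_comm] using (summable_nat_add_iff i).2 hps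
  exact hpn.trans_le (hs.le_tsum j fun k _ => hp _)

lemma Ptrans_nonneg (hp : ∀ n, 0 ≤ p n) (i j : ℕ) : 0 ≤ Ptrans p i j := by
  unfold Ptrans
  split_ifs <;> simp [hp]

lemma hasSum_Ptrans (hp1 : HasSum p 1) (i : ℕ) : HasSum (Ptrans p i) 1 := by
  rcases i with _ | i
  · exact hp1
  · convert hasSum_ite_eq i (1 : ℝ) using 1
    ext j
    simp [Ptrans, eq_comm]

lemma qtrans_nonneg (hp : ∀ n, 0 ≤ p n) (hm : ∀ i, 0 ≤ mdist p E i) (i j : ℕ) :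
    0 ≤ qtrans p E i j :=
  mul_nonneg (div_nonneg (hm j) (hm i)) (Ptrans_nonneg hp j i)

lemma mdist_mul_qtrans {j : ℕ} (hm : mdist p E j ≠ 0) (s : ℕ) :
    mdist p E j * qtrans p E j s = mdist p E s * Ptrans p s j := by
  unfold qtrans
  field_simp

lemma hasSum_mdist_mul_qtrans (hp1 : HasSum p 1) (hm : ∀ i, 0 < mdist p E i) (s : ℕ) :
    HasSum (fun j => mdist p E j * qtrans p E j s) (mdist p E s) := by
  simpa [mdist_mul_qtrans (hm _).ne'] using (hasSum_Ptrans hp1 s).mul_left (mdist p E s)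

lemma qtrans_succ_pos (hm : ∀ i, 0 < mdist p E i) (i : ℕ) : 0 < qtrans p E i (i + 1) := by
  simpa [qtrans, Ptrans] using div_pos (hm (i + 1)) (hm i)

lemma qtrans_zero_pos (hm : ∀ i, 0 < mdist p E i) {i : ℕ} (hpi : 0 < p i) :
    0 < qtrans p E i 0 := by
  simpa [qtrans, Ptrans] using mul_pos (div_pos (hm 0) (hm i)) hpi

end RenewalChain

theorem stmt13_general (p : ℕ → ℝ) (E : ℝ)
    (hp : ∀ n, 0 ≤ p n) (hp1 : HasSum p 1) (hp0 : 0 < p 0)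
    (hE : E = ∑' n : ℕ, (n : ℝ) * p n)
    (hsupp : ∀ N : ℕ, ∃ n, N ≤ n ∧ 0 < p n)
    (Pm : Measure (ℕ → ℕ)) [IsProbabilityMeasure Pm]
    (hPm : ∀ n, 1 ≤ n → ∀ ξ : ℕ → ℕ, Pm (cyl ξ n) = ENNReal.ofReal (cylProbQ p E ξ n))
    (N : ℕ) (hN : 1 ≤ N) (ξ : ℕ → ℕ) (hW : 0 < Pm (cyl ξ N)) :
    Tendsto (fun n => Pm (SigW ξ N n)) atTop (𝓝 0) := by
  have hE0 : 0 ≤ E := hE ▸ tsum_nonneg fun n => mul_nonneg n.cast_nonneg (hp n)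
  have hm : ∀ i, 0 < mdist p E i := fun i =>
    div_pos (tailSum_pos hp hp1.summable hsupp i) (by linarith)
  have hMarkov : IsMarkovMeasure Pm (mdist p E) (qtrans p E) := hPm
  have hm' : ∀ i, 0 ≤ mdist p E i := fun i => (hm i).le
  have hq := qtrans_nonneg hp hm'
  refine tendsto_zero_of_antitone_of_add_mul_le (fun _ _ h => measure_mono (SigW_antitone h))
    (measure_ne_top _ _) fun ε hε => ?_
  obtain ⟨M, hM⟩ := hMarkov.exists_forall_measure_lt_eval_le hm' hq
    (hasSum_mdist_mul_qtrans hp1 hm) hε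
  obtain ⟨S, hMS, hpS⟩ := hsupp M
  obtain ⟨δ, hδ, hδtop, K, hK⟩ := hMarkov.exists_SigW_contraction hm' hq
    (qtrans_succ_pos hm) (qtrans_zero_pos hm hp0) (qtrans_zero_pos hm hpS)
    (hMarkov.pos_of_measure_cyl_pos hq hN hW) hN
    fun k => (measure_mono fun ω h => show M < ω k from hMS.trans_lt h).trans (hM k)
  exact ⟨δ, hδ, hδtop, K, eventually_atTop.2 ⟨1, hK⟩⟩

/-- for every ℙ⁻-admissible cylinder W = [ξ₀,…,ξ_{N-1}],
ℙ⁻(Σ_n^W) → 0 as n → ∞. -/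
theorem stmt13 (p : ℕ → ℝ) (E : ℝ)
    (hp : ∀ n, 0 ≤ p n) (hp1 : HasSum p 1) (hp0 : 0 < p 0)
    (hmean : Summable fun n : ℕ => (n : ℝ) * p n)
    (hE : E = ∑' n : ℕ, (n : ℝ) * p n)
    (hsupp : ∀ N : ℕ, ∃ n, N ≤ n ∧ 0 < p n)
    (Pm : Measure (ℕ → ℕ)) [IsProbabilityMeasure Pm]
    (hPm : ∀ n, 1 ≤ n → ∀ ξ : ℕ → ℕ, Pm (cyl ξ n) = ENNReal.ofReal (cylProbQ p E ξ n))
    (N : ℕ) (hN : 1 ≤ N) (ξ : ℕ → ℕ) (hW : 0 < Pm (cyl ξ N)) :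
    Tendsto (fun n => Pm (SigW ξ N n)) atTop (𝓝 0) :=
  stmt13_general p E hp hp1 hp0 hE hsupp Pm hPm N hN ξ hW
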